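/- arXiv:1609.06601 — 3 statements merged into one kernel-verified Lean document; each statement's English description precedes it below -/
import Mathlib

section
/- Let D be an F-division algebra with involution ϑ and 𝒫 a prepositive cone on (D,ϑ) over an ordering P of F. Then PSD_ℓ(𝒫) := {B ∈ Sym(M_ℓ(D),ϑ^t) | ϑ(X)^t B X ∈ 𝒫 for all X ∈ D^ℓ} is a prepositive cone on (M_ℓ(D), ϑ^t) over P. -/
open Pointwise Matrix

/-- An ordering on a field `F`. -/
def IsOrdering {F : Type*} [Field F] (P : Set F) : Prop :=
  (∀ x ∈ P, ∀ y ∈ P, x + y ∈ P) ∧ (∀ x ∈ P, ∀ y ∈ P, x * y ∈ P) ∧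
  (∀ x : F, x ∈ P ∨ -x ∈ P) ∧ (∀ x ∈ P, -x ∈ P → x = 0)

/-- A prepositive cone on an `F`-algebra with involution `(A, star)`:
a subset of the symmetric elements which is nonempty, closed under addition,
closed under `p ↦ star x * p * x`, whose set of preserving scalars is an ordering
of `F`, and which is proper (`PC ∩ -PC = {0}`). -/
def IsPrepositiveCone (F : Type*) {A : Type*} [Field F] [Ring A] [Algebra F A] [StarRing A]
    (PC : Set A) : Prop :=
  (∀ a ∈ PC, star a = a) ∧ PC.Nonempty ∧ (∀ a ∈ PC, ∀ b ∈ PC, a + b ∈ PC) ∧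
  (∀ x : A, ∀ p ∈ PC, star x * p * x ∈ PC) ∧
  IsOrdering {u : F | ∀ p ∈ PC, u • p ∈ PC} ∧
  (∀ a ∈ PC, -a ∈ PC → a = 0)

/-- A prepositive cone over the ordering `P` of `F`. -/
def IsPrepositiveConeOver (F : Type*) {A : Type*} [Field F] [Ring A] [Algebra F A] [StarRing A]
    (P : Set F) (PC : Set A) : Prop :=
  IsPrepositiveCone F PC ∧ {u : F | ∀ p ∈ PC, u • p ∈ PC} = P

/-!
The cone axioms pass from `PC` to `psdCone PC` (the paper's `PSD_ℓ(PC)`) through the forms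
`X ↦ ϑ(X)ᵗ B X`. The scalars preserving `psdCone PC` are exactly those preserving `PC`: for
`p ∈ PC` the constant diagonal matrix `diagonal (fun _ => p)` lies in `psdCone PC`, and the form
of `u • diagonal (fun _ => p)` at a standard basis vector is `u • p`.
Properness is polarization: if the form of a hermitian `B` vanishes identically, then
`B i j * d + ϑ(B i j * d) = 0` for all `d`, and `d = (B i j)⁻¹` gives `2 = 0` unless `B i j = 0`.
-/

namespace Matrix

variable {ι R : Type*} [Fintype ι]

section Ring

variable [Ring R] [StarRing R]

theorem sum_sum_star_mul_mul_eq (B : Matrix ι ι R) (X : ι → R) :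
    ∑ i, ∑ j, star (X i) * B i j * X j = star X ⬝ᵥ B *ᵥ X := by
  simp [dotProduct, mulVec, Finset.mul_sum, mul_assoc]

theorem star_single_dotProduct_mulVec_single [DecidableEq ι] (B : Matrix ι ι R) (i j : ι)
    (a b : R) : star (Pi.single i a) ⬝ᵥ B *ᵥ Pi.single j b = star a * B i j * b := by
  rw [← Pi.single_star, single_dotProduct, mulVec_single]
  simp [mul_assoc]

theorem star_dotProduct_mulVec_conjTranspose_mul_mul (B M : Matrix ι ι R) (X : ι → R) :
    star X ⬝ᵥ (Mᴴ * B * M) *ᵥ X = star (M *ᵥ X) ⬝ᵥ B *ᵥ (M *ᵥ X) := by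
  rw [← mulVec_mulVec, ← mulVec_mulVec, dotProduct_mulVec, ← star_mulVec]

theorem IsHermitian.star_dotProduct_mulVec_add {B : Matrix ι ι R} (hB : B.IsHermitian)
    (X Y : ι → R) :
    star (X + Y) ⬝ᵥ B *ᵥ (X + Y) = star X ⬝ᵥ B *ᵥ X + star Y ⬝ᵥ B *ᵥ Y +
      (star X ⬝ᵥ B *ᵥ Y + star (star X ⬝ᵥ B *ᵥ Y)) := by
  have hYX : star Y ⬝ᵥ B *ᵥ X = star (star X ⬝ᵥ B *ᵥ Y) := by
    conv_lhs => rw [← hB.eq]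
    rw [star_dotProduct, star_mulVec, ← dotProduct_mulVec, conjTranspose_conjTranspose]
  simp only [star_add, add_dotProduct, mulVec_add, dotProduct_add, hYX]
  abel

end Ring

theorem IsHermitian.eq_zero_of_star_dotProduct_mulVec_self_eq_zero [DecidableEq ι]
    [DivisionRing R] [StarRing R] (h2 : (2 : R) ≠ 0) {B : Matrix ι ι R} (hB : B.IsHermitian)
    (hq : ∀ X, star X ⬝ᵥ B *ᵥ X = 0) : B = 0 := by
  ext i j
  by_contra hij
  have key := hq (Pi.single i 1 + Pi.single j (B i j)⁻¹)
  rw [hB.star_dotProduct_mulVec_add, hq, hq, star_single_dotProduct_mulVec_single, star_one,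
    one_mul, mul_inv_cancel₀ hij, star_one, zero_add, zero_add, one_add_one_eq_two] at key
  exact h2 key

def psdCone [Ring R] [StarRing R] (PC : Set R) : Set (Matrix ι ι R) :=
  {B | B.IsHermitian ∧ ∀ X, star X ⬝ᵥ B *ᵥ X ∈ PC}

end Matrix

theorem star_smul_of_star_algebraMap {F A : Type*} [Field F] [Ring A] [Algebra F A] [StarRing A]
    (hstar : ∀ c : F, star (algebraMap F A c) = algebraMap F A c) (u : F) (x : A) :
    star (u • x) = u • star x := by
  rw [Algebra.smul_def, star_mul, hstar, ← Algebra.commutes, ← Algebra.smul_def]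

namespace IsPrepositiveCone

variable {F A : Type*} [Field F] [Ring A] [Algebra F A] [StarRing A] {PC : Set A}

theorem star_eq (hPC : IsPrepositiveCone F PC) {a : A} (ha : a ∈ PC) : star a = a :=
  hPC.1 a ha

theorem add_mem (hPC : IsPrepositiveCone F PC) {a b : A} (ha : a ∈ PC) (hb : b ∈ PC) :
    a + b ∈ PC :=
  hPC.2.2.1 a ha b hb

theorem star_mul_mul_mem (hPC : IsPrepositiveCone F PC) (x : A) {p : A} (hp : p ∈ PC) :
    star x * p * x ∈ PC :=
  hPC.2.2.2.1 x p hp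

theorem isOrdering (hPC : IsPrepositiveCone F PC) :
    IsOrdering {u : F | ∀ p ∈ PC, u • p ∈ PC} :=
  hPC.2.2.2.2.1

theorem eq_zero_of_neg_mem (hPC : IsPrepositiveCone F PC) {a : A} (ha : a ∈ PC) (hna : -a ∈ PC) :
    a = 0 :=
  hPC.2.2.2.2.2 a ha hna

theorem zero_mem (hPC : IsPrepositiveCone F PC) : (0 : A) ∈ PC := by
  obtain ⟨p, hp⟩ := hPC.2.1
  simpa using hPC.star_mul_mul_mem 0 hp

theorem sum_mem {α : Type*} (hPC : IsPrepositiveCone F PC) {s : Finset α} {f : α → A}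
    (hf : ∀ i ∈ s, f i ∈ PC) : ∑ i ∈ s, f i ∈ PC :=
  Finset.sum_induction f (· ∈ PC) (fun _ _ => hPC.add_mem) hPC.zero_mem hf

end IsPrepositiveCone

namespace Matrix

variable {ι F D : Type*} [Fintype ι] [Field F] [Ring D] [StarRing D] [Algebra F D] {PC : Set D}

theorem zero_mem_psdCone (hPC : IsPrepositiveCone F PC) : (0 : Matrix ι ι D) ∈ psdCone PC :=
  ⟨isHermitian_zero, fun X => by simpa using hPC.zero_mem⟩

theorem add_mem_psdCone (hPC : IsPrepositiveCone F PC) {A B : Matrix ι ι D}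
    (hA : A ∈ psdCone PC) (hB : B ∈ psdCone PC) : A + B ∈ psdCone PC :=
  ⟨hA.1.add hB.1, fun X => by
    simpa only [add_mulVec, dotProduct_add] using hPC.add_mem (hA.2 X) (hB.2 X)⟩

theorem conjTranspose_mul_mul_mem_psdCone {B : Matrix ι ι D} (hB : B ∈ psdCone PC)
    (M : Matrix ι ι D) : Mᴴ * B * M ∈ psdCone PC :=
  ⟨isHermitian_conjTranspose_mul_mul M hB.1, fun X => by
    simpa only [star_dotProduct_mulVec_conjTranspose_mul_mul] using hB.2 (M *ᵥ X)⟩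

theorem smul_mem_psdCone (hstar : ∀ c : F, star (algebraMap F D c) = algebraMap F D c)
    {u : F} (hu : ∀ p ∈ PC, u • p ∈ PC) {B : Matrix ι ι D} (hB : B ∈ psdCone PC) :
    u • B ∈ psdCone PC := by
  refine ⟨?_, fun X => ?_⟩
  · ext i j
    simp only [conjTranspose_apply, smul_apply, star_smul_of_star_algebraMap hstar, hB.1.apply]
  · simpa only [smul_mulVec, dotProduct_smul] using hu _ (hB.2 X)

variable [DecidableEq ι]

theorem diagonal_const_mem_psdCone (hPC : IsPrepositiveCone F PC) {p : D} (hp : p ∈ PC) :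
    diagonal (fun _ : ι => p) ∈ psdCone PC := by
  refine ⟨isHermitian_diagonal_of_self_adjoint _ (funext fun _ => hPC.star_eq hp), fun X => ?_⟩
  have hX : star X ⬝ᵥ diagonal (fun _ => p) *ᵥ X = ∑ i, star (X i) * p * X i := by
    simp only [dotProduct, mulVec_diagonal, Pi.star_apply, mul_assoc]
  rw [hX]
  exact hPC.sum_mem fun i _ => hPC.star_mul_mul_mem (X i) hp

theorem smul_mem_of_smul_diagonal_const_mem_psdCone (i : ι) {u : F} {p : D}
    (h : u • diagonal (fun _ : ι => p) ∈ psdCone PC) : u • p ∈ PC := by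
  simpa using h.2 (Pi.single i 1)

theorem setOf_smul_mem_psdCone_eq [Nonempty ι] (hPC : IsPrepositiveCone F PC)
    (hstar : ∀ c : F, star (algebraMap F D c) = algebraMap F D c) :
    {u : F | ∀ B ∈ psdCone (ι := ι) PC, u • B ∈ psdCone PC} = {u | ∀ p ∈ PC, u • p ∈ PC} := by
  ext u
  refine ⟨fun hu p hp => ?_, fun hu B hB => smul_mem_psdCone hstar hu hB⟩
  exact smul_mem_of_smul_diagonal_const_mem_psdCone (Classical.arbitrary ι)
    (hu _ (diagonal_const_mem_psdCone hPC hp))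

end Matrix

theorem Matrix.eq_zero_of_mem_psdCone_of_neg_mem {ι F R : Type*} [Fintype ι] [DecidableEq ι]
    [Field F] [DivisionRing R] [StarRing R] [Algebra F R] {PC : Set R} (hPC : IsPrepositiveCone F PC) (h2 : (2 : R) ≠ 0)
    {B : Matrix ι ι R} (hB : B ∈ psdCone PC) (hnB : -B ∈ psdCone PC) : B = 0 :=
  hB.1.eq_zero_of_star_dotProduct_mulVec_self_eq_zero h2 fun X =>
    hPC.eq_zero_of_neg_mem (hB.2 X) (by simpa only [neg_mulVec, dotProduct_neg] using hnB.2 X)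

theorem IsPrepositiveConeOver.psdCone {ι F D : Type*} [Fintype ι] [DecidableEq ι] [Nonempty ι]
    [Field F] [DivisionRing D] [Algebra F D] [StarRing D] (h2 : (2 : F) ≠ 0)
    (hstar : ∀ c : F, star (algebraMap F D c) = algebraMap F D c) {P : Set F} {PC : Set D}
    (hPC : IsPrepositiveConeOver F P PC) :
    IsPrepositiveConeOver F P (psdCone (ι := ι) PC) := by
  obtain ⟨hcone, hP⟩ := hPC
  have h2D : (2 : D) ≠ 0 := by
    rw [← map_ofNat (algebraMap F D) 2]
    exact (map_ne_zero _).2 h2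
  have hscalars := setOf_smul_mem_psdCone_eq (ι := ι) hcone hstar
  refine ⟨⟨fun B hB => hB.1, ⟨0, zero_mem_psdCone hcone⟩,
    fun A hA B hB => add_mem_psdCone hcone hA hB,
    fun M B hB => conjTranspose_mul_mul_mem_psdCone hB M, hscalars ▸ hcone.isOrdering,
    fun B hB hnB => eq_zero_of_mem_psdCone_of_neg_mem hcone h2D hB hnB⟩, hscalars.trans hP⟩

theorem stmt_8_general {F D : Type*} [Field F] [DivisionRing D] [Algebra F D] [StarRing D]
    (h2 : (2 : F) ≠ 0)
    (hstar : ∀ c : F, star (algebraMap F D c) = algebraMap F D c)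
    (n : ℕ) (hn : 0 < n)
    (P : Set F) (PC : Set D) (hPC : IsPrepositiveConeOver F P PC) :
    IsPrepositiveConeOver F P
      {B : Matrix (Fin n) (Fin n) D | Bᴴ = B ∧
        ∀ X : Fin n → D, (∑ i, ∑ j, star (X i) * B i j * X j) ∈ PC} := by
  have : Nonempty (Fin n) := Fin.pos_iff_nonempty.1 hn
  simp only [Matrix.sum_sum_star_mul_mul_eq]
  exact hPC.psdCone h2 hstar

/-- If `PC` is a prepositive cone on a division algebra with involution `(D,ϑ)` over `P`,
then the set `PSD_ℓ(PC)` of hermitian matrices `B` with `ϑ(X)^t B X ∈ PC` for all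
`X ∈ D^ℓ` is a prepositive cone on `(M_ℓ(D), ϑ^t)` over `P`. -/
theorem stmt_8 {F D : Type*} [Field F] [DivisionRing D] [Algebra F D] [StarRing D]
    [FiniteDimensional F D] (h2 : (2 : F) ≠ 0)
    (hstar : ∀ c : F, star (algebraMap F D c) = algebraMap F D c)
    (n : ℕ) (hn : 0 < n)
    (P : Set F) (PC : Set D) (hPC : IsPrepositiveConeOver F P PC) :
    IsPrepositiveConeOver F P
      {B : Matrix (Fin n) (Fin n) D | Bᴴ = B ∧
        ∀ X : Fin n → D, (∑ i, ∑ j, star (X i) * B i j * X j) ∈ PC} :=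
  stmt_8_general h2 hstar n hn P PC hPC
end

section
/- Let D be an F-division algebra with involution ϑ and 𝒫 a prepositive cone on (M_ℓ(D),ϑ^t) over an ordering P of F. Then Tr_ℓ(𝒫) := {tr(B) | B ∈ 𝒫} is a prepositive cone on (D,ϑ) over P. -/
open Pointwise

/-
The trace set is the corner `{d | d E₀₀ ∈ 𝒫}`: conversely to `tr (d E₀₀) = d`, the corner of
`tr B` is `∑ᵢ E_{i0}ᴴ B E_{i0}`, a sum of conjugates of `B`. The corner embedding `d ↦ d E₀₀` is an
injective `F`-linear non-unital `*`-homomorphism, so the pull-back of `𝒫` along it inherits all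
cone axioms. Its scalar set contains `P`, and equals `P` by properness as soon as the corner has a
nonzero element; one is obtained from any nonzero `B ∈ 𝒫` by polarization, using `2 ≠ 0`.
-/

open Matrix

def coneScalars (F : Type*) {A : Type*} [SMul F A] (S : Set A) : Set F :=
  {u : F | ∀ p ∈ S, u • p ∈ S}

section Ordering

variable {F : Type*} [Field F] {P : Set F}

theorem IsOrdering.zero_mem (hP : IsOrdering P) : (0 : F) ∈ P := by
  simpa using hP.2.2.1 0

theorem IsOrdering.ne_univ (hP : IsOrdering P) : P ≠ Set.univ := by
  rintro rfl
  exact one_ne_zero (hP.2.2.2 1 trivial trivial)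

/-- Properness forces every scalar outside `P` to kill a nonzero element, so to be `0`. -/
theorem IsOrdering.coneScalars_eq {M : Type*} [AddCommGroup M] [Module F M] {S : Set M}
    (hP : IsOrdering P) (hPS : P ⊆ coneScalars F S) (hS : ∀ a ∈ S, -a ∈ S → a = 0)
    {a : M} (ha : a ∈ S) (ha0 : a ≠ 0) : coneScalars F S = P := by
  refine subset_antisymm (fun u hu => ?_) hPS
  rcases hP.2.2.1 u with hup | hun
  · exact hup
  · have hua : u • a = 0 := hS _ (hu a ha) (by simpa using hPS hun a ha)
    rw [(smul_eq_zero.mp hua).resolve_right ha0]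
    exact hP.zero_mem

end Ordering

section Cone

variable {F A : Type*} [Field F] [Ring A] [Algebra F A] [StarRing A] {PC : Set A}

theorem IsPrepositiveCone.zero_mem_s10 (hPC : IsPrepositiveCone F PC) : (0 : A) ∈ PC := by
  obtain ⟨p, hp⟩ := hPC.2.1
  simpa using hPC.2.2.2.1 0 p hp

theorem IsPrepositiveCone.sum_mem_s10 (hPC : IsPrepositiveCone F PC) {ι : Type*} (s : Finset ι)
    {f : ι → A} (hf : ∀ i ∈ s, f i ∈ PC) : ∑ i ∈ s, f i ∈ PC :=
  Finset.sum_induction f (· ∈ PC) (fun a b ha hb => hPC.2.2.1 a ha b hb) hPC.zero_mem_s10 hf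

/-- If the cone were `{0}`, every scalar would preserve it, and `F` is not an ordering of itself. -/
theorem IsPrepositiveCone.exists_ne_zero (hPC : IsPrepositiveCone F PC) :
    ∃ p ∈ PC, p ≠ 0 := by
  by_contra! h
  refine hPC.2.2.2.2.1.ne_univ (Set.eq_univ_of_forall fun u p hp => ?_)
  rw [h p hp, smul_zero]
  exact hPC.zero_mem_s10

theorem IsPrepositiveConeOver.preimage {B : Type*} [Ring B] [Algebra F B] [StarRing B]
    {P : Set F} {PC : Set B} (hPC : IsPrepositiveConeOver F P PC) (f : A →⋆ₙₐ[F] B)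
    (hf : Function.Injective f) {a : A} (ha : f a ∈ PC) (ha0 : a ≠ 0) :
    IsPrepositiveConeOver F P (f ⁻¹' PC) := by
  obtain ⟨⟨hsym, -, hadd, hconj, hOrd, hprop⟩, hP⟩ := hPC
  change IsOrdering (coneScalars F PC) at hOrd
  change coneScalars F PC = P at hP
  rw [hP] at hOrd
  have hPS : P ⊆ coneScalars F (f ⁻¹' PC) := fun u hu b hb => by
    rw [Set.mem_preimage, map_smul]
    exact (hP ▸ hu : u ∈ coneScalars F PC) _ hb
  have hprop' : ∀ b ∈ f ⁻¹' PC, -b ∈ f ⁻¹' PC → b = 0 := fun b hb hnb =>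
    hf <| by rw [map_zero]; exact hprop _ hb (by simpa using hnb)
  have hscal : coneScalars F (f ⁻¹' PC) = P := hOrd.coneScalars_eq hPS hprop' ha ha0
  refine ⟨⟨fun b hb => hf ?_, ⟨a, ha⟩, fun b hb c hc => ?_, fun x b hb => ?_, ?_, hprop'⟩,
    hscal⟩
  · rw [map_star]; exact hsym _ hb
  · simpa using hadd _ hb _ hc
  · simpa [map_star] using hconj (f x) _ hb
  · change IsOrdering (coneScalars F (f ⁻¹' PC))
    rwa [hscal]

end Cone

namespace Matrix

variable {n D : Type*} [Fintype n] [DecidableEq n]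

@[simps]
def singleStarHom (F : Type*) [CommSemiring F] [Semiring D] [Algebra F D] [StarRing D]
    (k : n) : D →⋆ₙₐ[F] Matrix n n D where
  toFun := single k k
  map_smul' _ _ := (smul_single _ _ _ _).symm
  map_zero' := single_zero _ _
  map_add' := single_add _ _
  map_mul' _ _ := (single_mul_single_same _ _ _ _ _).symm
  map_star' _ := (conjTranspose_single _ _ _).symm

theorem single_injective [AddCommMonoid D] (k : n) :
    Function.Injective (single k k : D → Matrix n n D) :=
  Function.LeftInverse.injective (g := trace) fun _ => trace_single_eq_same _ _

section Semiring

variable [Semiring D] [StarRing D]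

theorem single_trace_eq_sum_conj (B : Matrix n n D) (k : n) :
    single k k B.trace = ∑ i, star (single i k 1) * B * single i k 1 := by
  simp only [star_eq_conjTranspose, conjTranspose_single, star_one, single_mul_mul_single,
    one_mul, mul_one, trace, diag]
  exact map_sum (singleAddMonoidHom k k) _ _

theorem star_single_add_single_mul_mul (B : Matrix n n D) (i j k : n) (d : D) :
    star (single i k 1 + single j k d) * B * (single i k 1 + single j k d) =
      single k k (B i i + B i j * d + star d * B j i + star d * B j j * d) := by
  simp only [star_add, star_eq_conjTranspose, conjTranspose_single, star_one, add_mul, mul_add,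
    single_mul_mul_single, one_mul, mul_one, single_add]
  abel

end Semiring

/-- Polarization: a nonzero hermitian form takes a nonzero value, here `B i i` or
`b * b⁻¹ + star (b * b⁻¹) = 2` for an entry `b = B i j ≠ 0`. -/
theorem IsHermitian.exists_star_mul_mul_eq_single [DivisionRing D] [StarRing D]
    {B : Matrix n n D} (hB : B.IsHermitian) (hB0 : B ≠ 0) (h2 : (2 : D) ≠ 0) (k : n) :
    ∃ x : Matrix n n D, ∃ a ≠ 0, star x * B * x = single k k a := by
  by_cases hdiag : ∀ i, B i i = 0
  · obtain ⟨i, j, hij⟩ : ∃ i j, B i j ≠ 0 := by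
      by_contra! h
      exact hB0 (Matrix.ext h)
    refine ⟨single i k 1 + single j k (B i j)⁻¹, 2, h2, ?_⟩
    rw [star_single_add_single_mul_mul, hdiag, hdiag, ← hB.apply j i, ← star_mul,
      mul_inv_cancel₀ hij, star_one]
    simp [one_add_one_eq_two]
  · obtain ⟨i, hi⟩ := not_forall.mp hdiag
    refine ⟨single i k 1, B i i, hi, ?_⟩
    simp [star_eq_conjTranspose]

end Matrix

theorem IsPrepositiveCone.trace_image_eq_preimage_single {F D : Type*} [Field F] [Ring D]
    [Algebra F D] [StarRing D] {n : Type*} [Fintype n] [DecidableEq n]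
    {PC : Set (Matrix n n D)} (hPC : IsPrepositiveCone F PC) (k : n) :
    trace '' PC = single k k ⁻¹' PC := by
  ext a
  refine ⟨?_, fun ha => ⟨_, ha, trace_single_eq_same k a⟩⟩
  rintro ⟨B, hB, rfl⟩
  rw [Set.mem_preimage, single_trace_eq_sum_conj]
  exact hPC.sum_mem_s10 _ fun i _ => hPC.2.2.2.1 _ B hB

theorem stmt_10_general {F D : Type*} [Field F] [DivisionRing D] [Algebra F D] [StarRing D]
    (h2 : (2 : F) ≠ 0)
    (n : ℕ) (P : Set F)
    (PC : Set (Matrix (Fin (n + 1)) (Fin (n + 1)) D)) (hPC : IsPrepositiveConeOver F P PC) :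
    IsPrepositiveConeOver F P {d : D | ∃ B ∈ PC, Matrix.trace B = d} := by
  have h2D : (2 : D) ≠ 0 := by
    rw [← map_ofNat (algebraMap F D) 2]
    exact (map_ne_zero _).mpr h2
  obtain ⟨B, hB, hB0⟩ := hPC.1.exists_ne_zero
  obtain ⟨x, a, ha0, hxa⟩ :=
    IsHermitian.exists_star_mul_mul_eq_single (hPC.1.1 B hB) hB0 h2D 0
  have ha : singleStarHom F 0 a ∈ PC := by
    rw [singleStarHom_apply, ← hxa]
    exact hPC.1.2.2.2.1 x B hB
  change IsPrepositiveConeOver F P (trace '' PC)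
  rw [hPC.1.trace_image_eq_preimage_single 0]
  exact hPC.preimage (singleStarHom F 0) (single_injective 0) ha ha0

/-- If `PC` is a prepositive cone on `(M_ℓ(D), ϑ^t)` over `P` (`ℓ = n+1 ≥ 1`), then
`Tr_ℓ(PC) = {tr B | B ∈ PC}` is a prepositive cone on `(D, ϑ)` over `P`. -/
theorem stmt_10 {F D : Type*} [Field F] [DivisionRing D] [Algebra F D] [StarRing D]
    [FiniteDimensional F D] (h2 : (2 : F) ≠ 0)
    (hstar : ∀ c : F, star (algebraMap F D c) = algebraMap F D c)
    (n : ℕ) (P : Set F)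
    (PC : Set (Matrix (Fin (n + 1)) (Fin (n + 1)) D)) (hPC : IsPrepositiveConeOver F P PC) :
    IsPrepositiveConeOver F P {d : D | ∃ B ∈ PC, Matrix.trace B = d} :=
  stmt_10_general h2 n P PC hPC
end

section
/- Let F be a field of characteristic ≠ 2 with an ordering P. Let S ∈ M_n(F) be a diagonal matrix having at least two nonzero diagonal entries of opposite sign with respect to P, and let ε ∈ {-1,0,1}^n. Then there exists a diagonal matrix S' ∈ M_n(F) that is a sum of matrices of the form u E S E^t with u ∈ P and E ∈ M_n(F), and such that the sign (with respect to P) of the i-th diagonal entry of S' is ε_i for each i. -/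
open Matrix

/-! Conjugating `diag(s)` by the matrix unit `c • e_{m a}` moves `c² s_a` to position `(m, m)`.
Summing such conjugates over `m`, with `a` and `c ∈ {0, 1}` chosen per row, realises any
diagonal matrix whose entries are `0` or entries of `s`; the sign pattern `ε` is then obtained
by placing the positive entry `s_i`, the negative entry `s_j` or `0` in each row. -/

theorem IsOrdering.one_mem {F : Type*} [Field F] {P : Set F} (hP : IsOrdering P) :
    (1 : F) ∈ P := by
  rcases hP.2.2.1 1 with h | h
  · exact h
  · simpa using hP.2.1 _ h _ h

section Congruence

variable {ι R : Type*} [Fintype ι] [DecidableEq ι] [CommSemiring R]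

theorem single_mul_diagonal_mul_transpose_single (s : ι → R) (m a : ι) (c : R) :
    single m a c * diagonal s * (single m a c)ᵀ = single m m (c * s a * c) := by
  rw [transpose_single, single_mul_mul_single, diagonal_apply_eq]

theorem exists_diagonal_eq_sum_congr_diagonal (s d : ι → R)
    (hd : ∀ m, d m = 0 ∨ ∃ a, d m = s a) :
    ∃ E : ι → Matrix ι ι R, diagonal d = ∑ m, E m * diagonal s * (E m)ᵀ := by
  have hdc : ∀ m, ∃ a c, d m = c * s a * c := by
    intro m
    rcases hd m with h | ⟨a, h⟩
    · exact ⟨m, 0, by simp [h]⟩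
    · exact ⟨a, 1, by simp [h]⟩
  choose a c hac using hdc
  refine ⟨fun m => single m (a m) (c m), ?_⟩
  simp only [single_mul_diagonal_mul_transpose_single, ← hac, sum_single_eq_diagonal]

end Congruence

theorem stmt_12_general {F : Type*} [Field F]
    (P : Set F) (hP : IsOrdering P)
    (n : ℕ) (s : Fin n → F)
    (hsign : ∃ i j : Fin n, s i ∈ P ∧ s i ≠ 0 ∧ -s j ∈ P ∧ s j ≠ 0)
    (ε : Fin n → ℤ) :
    ∃ (S' : Matrix (Fin n) (Fin n) F) (k : ℕ) (u : Fin k → F)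
      (E : Fin k → Matrix (Fin n) (Fin n) F),
      (∀ m, u m ∈ P) ∧
      S' = ∑ m, u m • (E m * Matrix.diagonal s * (E m)ᵀ) ∧
      S'.IsDiag ∧
      ∀ i, (ε i = 1 → S' i i ∈ P ∧ S' i i ≠ 0) ∧
        (ε i = -1 → -S' i i ∈ P ∧ S' i i ≠ 0) ∧
        (ε i = 0 → S' i i = 0) := by
  obtain ⟨i, j, hi, hi0, hj, hj0⟩ := hsign
  let d : Fin n → F := fun m => if ε m = 0 then 0 else if ε m = 1 then s i else s j
  have hd : ∀ m, d m = 0 ∨ ∃ a, d m = s a := fun m => by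
    unfold d; split_ifs
    exacts [Or.inl rfl, Or.inr ⟨i, rfl⟩, Or.inr ⟨j, rfl⟩]
  obtain ⟨E, hE⟩ := exists_diagonal_eq_sum_congr_diagonal s d hd
  refine ⟨diagonal d, n, fun _ => 1, E, fun _ => hP.one_mem, by simpa only [one_smul],
    isDiag_diagonal d, fun m => ⟨fun h => ?_, fun h => ?_, fun h => ?_⟩⟩ <;>
    simp only [diagonal_apply_eq, d, h] <;> norm_num
  exacts [⟨hi, hi0⟩, ⟨hj, hj0⟩]

/-- If `S = diag(s)` has two nonzero diagonal entries of opposite sign w.r.t. `P`, then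
for any prescribed signs `ε i ∈ {-1,0,1}` there is a diagonal matrix `S'`, weakly
represented by `⟨S⟩_t` (i.e. a finite sum of matrices `u • (E * S * Eᵀ)` with `u ∈ P`),
whose `i`-th diagonal entry has sign `ε i` for every `i`. -/
theorem stmt_12 {F : Type*} [Field F] (h2 : (2 : F) ≠ 0)
    (P : Set F) (hP : IsOrdering P)
    (n : ℕ) (s : Fin n → F)
    (hsign : ∃ i j : Fin n, s i ∈ P ∧ s i ≠ 0 ∧ -s j ∈ P ∧ s j ≠ 0)
    (ε : Fin n → ℤ) (hε : ∀ i, ε i = -1 ∨ ε i = 0 ∨ ε i = 1) :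
    ∃ (S' : Matrix (Fin n) (Fin n) F) (k : ℕ) (u : Fin k → F)
      (E : Fin k → Matrix (Fin n) (Fin n) F),
      (∀ m, u m ∈ P) ∧
      S' = ∑ m, u m • (E m * Matrix.diagonal s * (E m)ᵀ) ∧
      S'.IsDiag ∧
      ∀ i, (ε i = 1 → S' i i ∈ P ∧ S' i i ≠ 0) ∧
        (ε i = -1 → -S' i i ∈ P ∧ S' i i ≠ 0) ∧
        (ε i = 0 → S' i i = 0) :=
  stmt_12_general P hP n s hsign ε
end
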